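/- Let k be a field. The k-linear map D on Zorn vector matrices given by D(a, (v₁,v₂,v₃), (w₁,w₂,w₃), d) = (w₁, (d − a, 0, 0), (0, v₃, −v₂), −w₁) is a derivation for the Zorn product, i.e. D(x * y) = D(x) * y + x * D(y) for all x, y, and satisfies D ∘ D ∘ D = 0. -/

import Mathlib

open Matrix

/-- A Zorn vector matrix (split octonion) over `k`. -/
abbrev Zorn (k : Type*) := k × (Fin 3 → k) × (Fin 3 → k) × k

variable {k : Type*} [Field k]

/-- The Zorn product of two Zorn vector matrices. -/
def zmul (x y : Zorn k) : Zorn k :=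
  (x.1 * y.1 + x.2.1 ⬝ᵥ y.2.2.1,
   x.1 • y.2.1 + y.2.2.2 • x.2.1 - x.2.2.1 ⨯₃ y.2.2.1,
   y.1 • x.2.2.1 + x.2.2.2 • y.2.2.1 + x.2.1 ⨯₃ y.2.1,
   x.2.2.2 * y.2.2.2 + x.2.2.1 ⬝ᵥ y.2.1)

/-- The short-root vector `E_δ`:
`D(a, (v₁,v₂,v₃), (w₁,w₂,w₃), d) = (w₁, (d − a, 0, 0), (0, v₃, −v₂), −w₁)`. -/
def Dshort (x : Zorn k) : Zorn k :=
  (x.2.2.1 0, ![x.2.2.2 - x.1, 0, 0], ![0, x.2.1 2, -x.2.1 1], -x.2.2.1 0)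

lemma Dshort_Dshort (x : Zorn k) : Dshort (Dshort x) = (0, ![-(2 * x.2.2.1 0), 0, 0], 0, 0) := by
  ext i <;> try fin_cases i
  all_goals simp [Dshort]
  ring

lemma Dshort_Dshort_Dshort (x : Zorn k) : Dshort (Dshort (Dshort x)) = 0 := by
  rw [Dshort_Dshort]
  ext i <;> try fin_cases i
  all_goals simp [Dshort]

lemma Dshort_zmul (x y : Zorn k) :
    Dshort (zmul x y) = zmul (Dshort x) y + zmul x (Dshort y) := by
  ext i <;> try fin_cases i
  all_goals
    simp [Dshort, zmul, cross_apply, dotProduct, Fin.sum_univ_three, vecHead, vecTail]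
    ring

/-- `Dshort` is a derivation for the Zorn product and cubes to zero. -/
theorem Dshort_derivation :
    (∀ x y : Zorn k, Dshort (zmul x y) = zmul (Dshort x) y + zmul x (Dshort y)) ∧
    (Dshort ∘ Dshort ∘ Dshort = (0 : Zorn k → Zorn k)) :=
  ⟨Dshort_zmul, funext Dshort_Dshort_Dshort⟩
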